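/- For every fixed s ∈ ℝ²∖Γ₀, the map x ↦ Ĝ(x,s) is harmonic on ℝ²∖(Γ₀ ∪ {s}), and it satisfies the homogeneous Neumann boundary condition on the crack faces: at every point (x₁,0) of Γ₀ with x₁ < 0, the one-sided limits of ∂Ĝ/∂x₂(x₁,x₂,s) as x₂ → 0⁺ and as x₂ → 0⁻ both equal 0. -/

import Mathlib

open Filter Topology

noncomputable section

/-- Lattice sites of `Λ = ℤ² − (1/2,1/2)` are indexed by `ℤ²`. -/
abbrev Z2 := ℤ × ℤ

/-- The nearest-neighbour directions `ℛ = {e₁, e₂, −e₁, −e₂}`. -/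
def Rall : Finset Z2 := {((1:ℤ),(0:ℤ)), (0,1), (-1,0), (0,-1)}

/-- The crack-adjusted stencil `ℛ(m)`: the lattice site indexed by `l ∈ ℤ²` sits at
`latpos l = l − (1/2,1/2)`, so it lies on `Γ₊` iff `l.1 ≤ 0 ∧ l.2 = 1` (where `e₂` points
away from the crack and `−e₂` is erased), and on `Γ₋` iff `l.1 ≤ 0 ∧ l.2 = 0` (where `e₂`
is erased). -/
def Rm (m : Z2) : Finset Z2 :=
  if m.1 ≤ 0 ∧ m.2 = 1 then Rall.erase (0,-1)
  else if m.1 ≤ 0 ∧ m.2 = 0 then Rall.erase (0,1)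
  else Rall

/-- Discrete gradient component `(Du(m))_ρ`. -/
def Dg (u : Z2 → ℝ) (m ρ : Z2) : ℝ :=
  if ρ ∈ Rm m then u (m + ρ) - u m else 0

/-- `|Du(m)|²`. -/
def gradSq (u : Z2 → ℝ) (m : Z2) : ℝ := ∑ ρ ∈ Rall, (Dg u m ρ) ^ 2

/-- The index of the distinguished lattice site `x̂ = (1/2,1/2)`. -/
def xhat : Z2 := (1, 1)

/-- Membership in the discrete energy space `ℋ¹`: `Du ∈ ℓ²` and `u(x̂) = 0`. -/
def memH1 (u : Z2 → ℝ) : Prop := Summable (gradSq u) ∧ u xhat = 0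

/-- `‖u‖_{ℋ¹} = ‖Du‖_{ℓ²}`. -/
def H1norm (u : Z2 → ℝ) : ℝ := Real.sqrt (∑' m, gradSq u m)

/-- Euclidean norm on `ℝ²`. -/
def nrm (x : ℝ × ℝ) : ℝ := Real.sqrt (x.1 ^ 2 + x.2 ^ 2)

/-- The crack set `Γ₀ = {(x₁,0) : x₁ ≤ 0}`. -/
def Gamma0 : Set (ℝ × ℝ) := {x | x.1 ≤ 0 ∧ x.2 = 0}

/-- Position in `ℝ²` of the lattice site indexed by `l ∈ ℤ²`. -/
def latpos (l : Z2) : ℝ × ℝ := ((l.1 : ℝ) - 1/2, (l.2 : ℝ) - 1/2)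

/-- The complex square root map `ω`, in polar coordinates with `θ = arg ∈ (−π,π]`:
`ω(x) = (√r cos(θ/2), √r sin(θ/2))`. -/
def omegaMap (x : ℝ × ℝ) : ℝ × ℝ :=
  (Real.sqrt (nrm x) * Real.cos (Complex.arg ((x.1 : ℂ) + (x.2 : ℂ) * Complex.I) / 2),
   Real.sqrt (nrm x) * Real.sin (Complex.arg ((x.1 : ℂ) + (x.2 : ℂ) * Complex.I) / 2))

/-- The reflection `ω*` of `ω` through the vertical axis. -/
def omegaStar (x : ℝ × ℝ) : ℝ × ℝ := (-(omegaMap x).1, (omegaMap x).2)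

/-- The continuum Green's function for the crack geometry (with `C_Λ = 2`):
`Ĝ(x,s) = −(1/(2π·2)) [log|ω(x) − ω(s)| + log|ω(x) − ω*(s)|]`. -/
def Ghat (x s : ℝ × ℝ) : ℝ :=
  -(1 / (2 * Real.pi * 2)) *
    (Real.log (nrm (omegaMap x - omegaMap s)) + Real.log (nrm (omegaMap x - omegaStar s)))

/-- First partial derivative `∂f/∂x₁`. -/
def pd1 (f : ℝ × ℝ → ℝ) (x : ℝ × ℝ) : ℝ := deriv (fun t => f (t, x.2)) x.1

/-- Second partial derivative `∂f/∂x₂`. -/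
def pd2 (f : ℝ × ℝ → ℝ) (x : ℝ × ℝ) : ℝ := deriv (fun t => f (x.1, t)) x.2

/-!
In the coordinate `z = x₁ + i x₂` the map `ω` is the principal square root, so
`Ĝ(·, s) = -(1/4π) (log |√z - w| + log |√z + w̄|)` with `w = √σ`, `Re w > 0`. Off `Γ₀ ∪ {s}` both
`√z - w` and `√z + w̄` are holomorphic and zero-free, and the log-modulus of such a function is
harmonic. Along a vertical line `∂₂Ĝ = -(1/4π) Re((2q)⁻¹ i ((q - w)⁻¹ + (q + w̄)⁻¹))` with `q = √z`.
Approaching a crack point `x₁ < 0` from either side, `q` tends to a nonzero purely imaginary `L`;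
there `L + w̄ = -conj(L - w)` makes the bracket purely imaginary while `(2L)⁻¹ i` is real, so the
limit of `∂₂Ĝ` is `0`.
-/

open Complex ComplexConjugate InnerProductSpace

local notation "toℂ" => Complex.equivRealProdCLM.symm

section PartialDerivatives

lemma hasDerivAt_equivRealProdCLM_symm_horizontal (x : ℝ × ℝ) :
    HasDerivAt (fun t : ℝ => toℂ (t, x.2)) 1 x.1 := by
  simp only [equivRealProdCLM_symm_apply]
  exact (hasDerivAt_id (x.1 : ℂ)).comp_ofReal.add_const _

lemma hasDerivAt_equivRealProdCLM_symm_vertical (x : ℝ × ℝ) :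
    HasDerivAt (fun t : ℝ => toℂ (x.1, t)) I x.2 := by
  simp only [equivRealProdCLM_symm_apply]
  simpa using ((hasDerivAt_id (x.2 : ℂ)).comp_ofReal.mul_const I).const_add (x.1 : ℂ)

lemma tendsto_equivRealProdCLM_symm_vertical (x₁ : ℝ) (S : Set ℝ) :
    Tendsto (fun t => toℂ (x₁, t)) (𝓝[S] 0) (𝓝[{z | z.im ∈ S}] (x₁ : ℂ)) := by
  refine tendsto_nhdsWithin_iff.mpr ⟨?_, eventually_mem_nhdsWithin.mono fun t ht => by simpa⟩
  have hcont : Continuous fun t : ℝ => toℂ (x₁, t) := by fun_prop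
  have := (hcont.tendsto 0).mono_left (nhdsWithin_le_nhds (s := S))
  rwa [equivRealProdCLM_symm_apply, ofReal_zero, zero_mul, add_zero] at this

variable {g : ℂ → ℝ} {x : ℝ × ℝ}

lemma pd1_congr_nhds {f₁ f₂ : ℝ × ℝ → ℝ} (h : f₁ =ᶠ[𝓝 x] f₂) : pd1 f₁ x = pd1 f₂ x :=
  (h.comp_tendsto ((continuous_id.prodMk continuous_const).tendsto x.1)).deriv_eq

lemma pd2_congr_nhds {f₁ f₂ : ℝ × ℝ → ℝ} (h : f₁ =ᶠ[𝓝 x] f₂) : pd2 f₁ x = pd2 f₂ x :=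
  (h.comp_tendsto ((continuous_const.prodMk continuous_id).tendsto x.2)).deriv_eq

lemma pd1_comp_equivRealProdCLM_symm (hg : DifferentiableAt ℝ g (toℂ x)) :
    pd1 (g ∘ toℂ) x = fderiv ℝ g (toℂ x) 1 :=
  (hg.hasFDerivAt.comp_hasDerivAt x.1 (hasDerivAt_equivRealProdCLM_symm_horizontal x)).deriv

lemma pd2_comp_equivRealProdCLM_symm (hg : DifferentiableAt ℝ g (toℂ x)) :
    pd2 (g ∘ toℂ) x = fderiv ℝ g (toℂ x) I :=
  (hg.hasFDerivAt.comp_hasDerivAt x.2 (hasDerivAt_equivRealProdCLM_symm_vertical x)).deriv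

lemma pd1_pd1_comp_equivRealProdCLM_symm (hg : ContDiffAt ℝ 2 g (toℂ x)) :
    pd1 (pd1 (g ∘ toℂ)) x = iteratedFDeriv ℝ 2 g (toℂ x) ![1, 1] := by
  have hg' : DifferentiableAt ℝ (fderiv ℝ g) (toℂ x) :=
    (hg.fderiv_right (m := 1) (by norm_num)).differentiableAt (by norm_num)
  have hpd1 : pd1 (g ∘ toℂ) =ᶠ[𝓝 x] (fun z => fderiv ℝ g z 1) ∘ toℂ := by
    filter_upwards [(toℂ).continuous.continuousAt.eventually (hg.eventually (by simp))] with y hy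
    exact pd1_comp_equivRealProdCLM_symm (hy.differentiableAt (by simp))
  rw [pd1_congr_nhds hpd1,
    pd1_comp_equivRealProdCLM_symm (hg'.clm_apply (differentiableAt_const _)),
    fderiv_clm_apply hg' (differentiableAt_const _), iteratedFDeriv_two_apply]
  simp

lemma pd2_pd2_comp_equivRealProdCLM_symm (hg : ContDiffAt ℝ 2 g (toℂ x)) :
    pd2 (pd2 (g ∘ toℂ)) x = iteratedFDeriv ℝ 2 g (toℂ x) ![I, I] := by
  have hg' : DifferentiableAt ℝ (fderiv ℝ g) (toℂ x) :=
    (hg.fderiv_right (m := 1) (by norm_num)).differentiableAt (by norm_num)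
  have hpd2 : pd2 (g ∘ toℂ) =ᶠ[𝓝 x] (fun z => fderiv ℝ g z I) ∘ toℂ := by
    filter_upwards [(toℂ).continuous.continuousAt.eventually (hg.eventually (by simp))] with y hy
    exact pd2_comp_equivRealProdCLM_symm (hy.differentiableAt (by simp))
  rw [pd2_congr_nhds hpd2,
    pd2_comp_equivRealProdCLM_symm (hg'.clm_apply (differentiableAt_const _)),
    fderiv_clm_apply hg' (differentiableAt_const _), iteratedFDeriv_two_apply]
  simp

theorem InnerProductSpace.HarmonicAt.pd1_pd1_add_pd2_pd2_comp_eq_zero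
    (hg : HarmonicAt g (toℂ x)) :
    pd1 (pd1 (g ∘ toℂ)) x + pd2 (pd2 (g ∘ toℂ)) x = 0 := by
  rw [pd1_pd1_comp_equivRealProdCLM_symm hg.1, pd2_pd2_comp_equivRealProdCLM_symm hg.1,
    ← congrFun (laplacian_eq_iteratedFDeriv_complexPlane g), hg.2.eq_of_nhds]
  rfl

end PartialDerivatives

def csqrt (z : ℂ) : ℂ := z ^ (2⁻¹ : ℂ)

lemma csqrt_injective : Function.Injective csqrt := fun z w h => by
  rw [← cpow_nat_inv_pow z two_ne_zero, ← cpow_nat_inv_pow w two_ne_zero]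
  simp only [csqrt] at h
  push_cast
  rw [h]

lemma csqrt_eq_exp {z : ℂ} (hz : z ≠ 0) : csqrt z = exp (log z / 2) := by
  rw [csqrt, cpow_def_of_ne_zero hz, div_eq_mul_inv]

lemma re_csqrt_pos {z : ℂ} (hz : z ∈ slitPlane) : 0 < (csqrt z).re := by
  rw [csqrt_eq_exp (slitPlane_ne_zero hz), exp_re]
  have harg : z.arg < Real.pi := (arg_le_pi z).lt_of_ne (slitPlane_arg_ne_pi hz)
  refine mul_pos (Real.exp_pos _) (Real.cos_pos_of_mem_Ioo ⟨?_, ?_⟩) <;>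
    simp only [div_ofNat_im, log_im] <;> linarith [neg_pi_lt_arg z]

lemma hasDerivAt_csqrt {z : ℂ} (hz : z ∈ slitPlane) : HasDerivAt csqrt (2 * csqrt z)⁻¹ z := by
  refine (hasStrictDerivAt_cpow_const (c := 2⁻¹) hz).hasDerivAt.congr_deriv ?_
  rw [show (2⁻¹ : ℂ) - 1 = -2⁻¹ by norm_num, cpow_neg, mul_inv, csqrt]

lemma analyticAt_csqrt {z : ℂ} (hz : z ∈ slitPlane) : AnalyticAt ℂ csqrt z :=
  analyticAt_id.cpow analyticAt_const hz

lemma nrm_eq_norm (x : ℝ × ℝ) : nrm x = ‖toℂ x‖ := by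
  rw [nrm, norm_def, normSq_apply]
  simp [sq]

lemma equivRealProdCLM_symm_omegaMap (x : ℝ × ℝ) : toℂ (omegaMap x) = csqrt (toℂ x) := by
  set z := toℂ x
  have harg : Complex.arg ((x.1 : ℂ) + (x.2 : ℂ) * I) = z.arg :=
    congrArg arg (equivRealProdCLM_symm_apply x).symm
  rcases eq_or_ne z 0 with hz | hz
  · have hx : x = 0 := (toℂ).map_eq_zero_iff.mp hz
    simp [hz, hx, omegaMap, nrm, csqrt]
  · have hsqrt : Real.sqrt ‖z‖ = Real.exp (Real.log ‖z‖ / 2) := by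
      rw [Real.sqrt_eq_rpow, Real.rpow_def_of_pos (norm_pos_iff.mpr hz)]
      ring_nf
    rw [csqrt_eq_exp hz]
    apply Complex.ext <;>
      simp [omegaMap, exp_re, exp_im, nrm_eq_norm, harg, hsqrt, div_ofNat_re, div_ofNat_im, log_re,
        log_im, z]

/-- `Ĝ(·, s)` in the coordinate `z = x₁ + i x₂`, where `w = ω(s)` read as a complex number. -/
def greenC (w z : ℂ) : ℝ :=
  -(1 / (2 * Real.pi * 2)) * (Real.log ‖csqrt z - w‖ + Real.log ‖csqrt z + conj w‖)

lemma Ghat_eq_greenC_comp (s : ℝ × ℝ) :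
    (fun y => Ghat y s) = greenC (csqrt (toℂ s)) ∘ toℂ := by
  funext y
  have hstar : toℂ (omegaStar s) = -conj (csqrt (toℂ s)) := by
    rw [← equivRealProdCLM_symm_omegaMap]
    apply Complex.ext <;> simp [omegaStar]
  simp only [Ghat, greenC, Function.comp_apply, nrm_eq_norm, map_sub,
    equivRealProdCLM_symm_omegaMap, hstar, sub_neg_eq_add]

lemma csqrt_add_conj_ne_zero {z w : ℂ} (hz : z ∈ slitPlane) (hw : 0 < w.re) :
    csqrt z + conj w ≠ 0 := fun h => by
  have := congrArg re h
  simp only [add_re, conj_re, zero_re] at this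
  linarith [re_csqrt_pos hz]

lemma harmonicAt_greenC {z w : ℂ} (hz : z ∈ slitPlane) (hw : 0 < w.re) (hzw : csqrt z ≠ w) :
    HarmonicAt (greenC w) z := by
  have hsqrt := analyticAt_csqrt hz
  exact (((hsqrt.sub analyticAt_const).harmonicAt_log_norm (sub_ne_zero.mpr hzw)).add
    ((hsqrt.add analyticAt_const).harmonicAt_log_norm (csqrt_add_conj_ne_zero hz hw))).const_smul

lemma HasDerivAt.log_norm {f : ℝ → ℂ} {f' : ℂ} {t : ℝ} (hf : HasDerivAt f f' t) (h0 : f t ≠ 0) :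
    HasDerivAt (fun t => Real.log ‖f t‖) (f' / f t).re t := by
  have hlog : (fun t => Real.log ‖f t‖) = fun t => Real.log (‖f t‖ ^ 2) / 2 := by
    funext s
    rw [Real.log_pow]
    ring
  rw [hlog]
  refine ((hf.norm_sq.log (by positivity)).div_const 2).congr_deriv ?_
  rw [Complex.inner, div_re, ← normSq_eq_norm_sq, mul_re, conj_re, conj_im]
  field_simp
  ring

/-- `∂₂` of `greenC w` at the point `z` with `csqrt z = q`. -/
def greenCDy (w q : ℂ) : ℝ :=
  -(1 / (2 * Real.pi * 2)) * ((2 * q)⁻¹ * I * ((q - w)⁻¹ + (q + conj w)⁻¹)).re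

lemma pd2_greenC_comp {w : ℂ} {x : ℝ × ℝ} (hx : toℂ x ∈ slitPlane) (hw : 0 < w.re)
    (hxw : csqrt (toℂ x) ≠ w) :
    pd2 (greenC w ∘ toℂ) x = greenCDy w (csqrt (toℂ x)) := by
  have hline : HasDerivAt (fun t : ℝ => csqrt (toℂ (x.1, t))) ((2 * csqrt (toℂ x))⁻¹ * I) x.2 :=
    (hasDerivAt_csqrt hx).comp x.2 (hasDerivAt_equivRealProdCLM_symm_vertical x)
  have h1 := (hline.sub_const w).log_norm (sub_ne_zero.mpr hxw)
  have h2 := (hline.add_const (conj w)).log_norm (csqrt_add_conj_ne_zero hx hw)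
  refine (((h1.add h2).const_mul (-(1 / (2 * Real.pi * 2)))).congr_deriv ?_).deriv
  simp only [greenCDy, mul_add, add_re, div_eq_mul_inv, mul_assoc]

lemma greenCDy_eq_zero_of_re_eq_zero (w : ℂ) {L : ℂ} (hL : L.re = 0) : greenCDy w L = 0 := by
  obtain ⟨b, rfl⟩ : ∃ b : ℝ, L = b * I := ⟨L.im, Complex.ext (by simp [hL]) (by simp)⟩
  have hconj : (b * I : ℂ) + conj w = -conj (b * I - w) := by
    simp only [map_sub, map_mul, conj_ofReal, conj_I]
    ring
  rw [greenCDy, hconj, inv_neg, ← map_inv₀, ← sub_eq_add_neg, sub_conj]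
  simp

lemma continuousAt_greenCDy {w L : ℂ} (hw : 0 < w.re) (hL0 : L ≠ 0) (hL : L.re = 0) :
    ContinuousAt (greenCDy w) L := by
  have h1 : L - w ≠ 0 := fun h => by
    have := congrArg re h
    simp only [sub_re, zero_re] at this
    linarith
  have h2 : L + conj w ≠ 0 := fun h => by
    have := congrArg re h
    simp only [add_re, conj_re, zero_re] at this
    linarith
  have h3 : 2 * L ≠ 0 := mul_ne_zero two_ne_zero hL0
  have hC : ContinuousAt (fun q : ℂ => (2 * q)⁻¹ * I * ((q - w)⁻¹ + (q + conj w)⁻¹)) L :=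
    (((continuousAt_const.mul continuousAt_id).inv₀ h3).mul continuousAt_const).mul
      (((continuousAt_id.sub continuousAt_const).inv₀ h1).add
        ((continuousAt_id.add continuousAt_const).inv₀ h2))
  exact continuousAt_const.mul (continuous_re.continuousAt.comp hC)

lemma tendsto_csqrt_of_tendsto_log {α : Type*} {l : Filter α} {γ : α → ℂ} {ℓ : ℂ}
    (hlog : Tendsto (fun a => log (γ a)) l (𝓝 ℓ)) (h0 : ∀ᶠ a in l, γ a ≠ 0) :
    Tendsto (fun a => csqrt (γ a)) l (𝓝 (exp (ℓ / 2))) :=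
  ((continuous_exp.tendsto _).comp (hlog.div_const 2)).congr'
    (h0.mono fun _ ha => (csqrt_eq_exp ha).symm)

lemma re_exp_half_eq_zero {ℓ : ℂ} (hℓ : ℓ.im = Real.pi ∨ ℓ.im = -Real.pi) :
    (exp (ℓ / 2)).re = 0 := by
  rcases hℓ with h | h <;> simp [exp_re, div_ofNat_im, h, neg_div]

lemma mem_slitPlane_of_notMem_Gamma0 {x : ℝ × ℝ} (hx : x ∉ Gamma0) : toℂ x ∈ slitPlane := by
  simp only [Gamma0, Set.mem_ofPred_eq, not_and] at hx
  simpa [mem_slitPlane_iff] using (lt_or_ge 0 x.1).imp_right hx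

lemma pd2_Ghat {s x : ℝ × ℝ} (hs : s ∉ Gamma0) (hx : x ∉ Gamma0) (hxs : x ≠ s) :
    pd2 (fun y => Ghat y s) x = greenCDy (csqrt (toℂ s)) (csqrt (toℂ x)) := by
  rw [Ghat_eq_greenC_comp]
  exact pd2_greenC_comp (mem_slitPlane_of_notMem_Gamma0 hx)
    (re_csqrt_pos (mem_slitPlane_of_notMem_Gamma0 hs))
    (csqrt_injective.ne ((toℂ).injective.ne hxs))

lemma tendsto_pd2_Ghat_of_tendsto_log {s : ℝ × ℝ} (hs : s ∉ Gamma0) {x₁ : ℝ}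
    (hx₁ : x₁ < 0) {l : Filter ℝ} (hl : l ≤ 𝓝[≠] 0) {ℓ : ℂ} (hℓ : ℓ.im = Real.pi ∨ ℓ.im = -Real.pi)
    (hlog : Tendsto (fun t => log (toℂ (x₁, t))) l (𝓝 ℓ)) :
    Tendsto (fun t => pd2 (fun y => Ghat y s) (x₁, t)) l (𝓝 0) := by
  have hoff : ∀ᶠ t in l, (x₁, t) ∉ Gamma0 ∧ (x₁, t) ≠ s := by
    have hcrack : ∀ᶠ t in 𝓝 (0 : ℝ), (x₁, t) ≠ s :=
      (continuous_const.prodMk continuous_id).continuousAt.eventually_ne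
        (fun h => hs (h ▸ ⟨hx₁.le, rfl⟩))
    filter_upwards [hl self_mem_nhdsWithin, hl (nhdsWithin_le_nhds hcrack)] with t ht hts
    exact ⟨fun h => ht h.2, hts⟩
  have hsqrt := tendsto_csqrt_of_tendsto_log hlog
    (hoff.mono fun t ht => slitPlane_ne_zero (mem_slitPlane_of_notMem_Gamma0 ht.1))
  rw [← greenCDy_eq_zero_of_re_eq_zero (csqrt (toℂ s)) (re_exp_half_eq_zero hℓ)]
  refine ((continuousAt_greenCDy (re_csqrt_pos (mem_slitPlane_of_notMem_Gamma0 hs))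
    (exp_ne_zero _) (re_exp_half_eq_zero hℓ)).tendsto.comp hsqrt).congr' ?_
  filter_upwards [hoff] with t ht
  exact (pd2_Ghat hs ht.1 ht.2).symm

/-- **Statement 9.** For fixed `s ∈ ℝ²∖Γ₀`, `x ↦ Ĝ(x,s)` is harmonic on `ℝ²∖(Γ₀ ∪ {s})` and
satisfies the homogeneous Neumann condition on both crack faces. -/
theorem Ghat_harmonic_and_neumann (s : ℝ × ℝ) (hs : s ∉ Gamma0) :
    (∀ x : ℝ × ℝ, x ∉ Gamma0 → x ≠ s →
      pd1 (pd1 (fun y => Ghat y s)) x + pd2 (pd2 (fun y => Ghat y s)) x = 0) ∧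
    (∀ x₁ : ℝ, x₁ < 0 →
      Tendsto (fun t : ℝ => pd2 (fun y => Ghat y s) (x₁, t))
        (nhdsWithin 0 (Set.Ioi 0)) (nhds 0) ∧
      Tendsto (fun t : ℝ => pd2 (fun y => Ghat y s) (x₁, t))
        (nhdsWithin 0 (Set.Iio 0)) (nhds 0)) := by
  refine ⟨fun x hx hxs => ?_, fun x₁ hx₁ => ⟨?_, ?_⟩⟩
  · rw [Ghat_eq_greenC_comp]
    exact (harmonicAt_greenC (mem_slitPlane_of_notMem_Gamma0 hx)
      (re_csqrt_pos (mem_slitPlane_of_notMem_Gamma0 hs))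
      (csqrt_injective.ne ((toℂ).injective.ne hxs))).pd1_pd1_add_pd2_pd2_comp_eq_zero
  · exact tendsto_pd2_Ghat_of_tendsto_log hs hx₁ (nhdsWithin_mono _ fun t ht => ne_of_gt ht)
      (by simp) ((tendsto_log_nhdsWithin_im_nonneg_of_re_neg_of_im_zero (by simpa) (by simp)).comp
        ((tendsto_equivRealProdCLM_symm_vertical x₁ _).mono_left
          (nhdsWithin_mono _ Set.Ioi_subset_Ici_self)))
  · exact tendsto_pd2_Ghat_of_tendsto_log hs hx₁ (nhdsWithin_mono _ fun t ht => ne_of_lt ht)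
      (by simp) ((tendsto_log_nhdsWithin_im_neg_of_re_neg_of_im_zero (by simpa) (by simp)).comp
        (tendsto_equivRealProdCLM_symm_vertical x₁ _))
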